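/- Let p be a prime, s a positive integer, q = p^s, and R = Z_q[u]/(u^2). For polynomials f, g ∈ R[X], f and g are coprime over R (i.e., there exist a, b ∈ R[X] with a·f + b·g = 1) if and only if their coefficientwise reductions modulo (p,u) are coprime polynomials in F_p[X]. -/
import Mathlib


open Polynomial

/-- The reduction map `R = Z_q[u]/(u^2) → F_p` sending `a + b·u` to `a mod p`. -/
noncomputable def dualRed (p s : ℕ) (hs : 0 < s) :
    DualNumber (ZMod (p ^ s)) →+* ZMod p :=
  (ZMod.castHom (dvd_pow_self p hs.ne') (ZMod p)).comp
    (TrivSqZeroExt.fstHom (ZMod (p ^ s)) (ZMod (p ^ s)) (ZMod (p ^ s))).toRingHom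

lemma dualRed_surjective (p s : ℕ) [Fact p.Prime] (hs : 0 < s) :
    Function.Surjective (dualRed p s hs) := by
  intro y
  refine ⟨(y.val : DualNumber (ZMod (p ^ s))), ?_⟩
  rw [map_natCast, ZMod.natCast_val, ZMod.cast_id]

lemma nilp_of_dualRed_eq_zero (p s : ℕ) [Fact p.Prime] (hs : 0 < s)
    (c : DualNumber (ZMod (p ^ s))) (hc : dualRed p s hs c = 0) : IsNilpotent c := by
  have hfst : ((c.fst.val : ℕ) : ZMod p) = 0 := by
    have : dualRed p s hs c = ((c.fst.val : ℕ) : ZMod p) := by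
      simp [dualRed, ZMod.natCast_val]
    rw [← this, hc]
  have hdvd : p ∣ c.fst.val := (ZMod.natCast_eq_zero_iff _ _).mp hfst
  obtain ⟨k, hk⟩ := hdvd
  have hfstnil : IsNilpotent c.fst := by
    refine ⟨s, ?_⟩
    have : c.fst = ((p * k : ℕ) : ZMod (p ^ s)) := by
      rw [← hk, ZMod.natCast_val, ZMod.cast_id]
    rw [this, ← Nat.cast_pow, mul_pow]
    simp [Nat.cast_mul, Nat.cast_pow, ZMod.natCast_self]
  have h1 : IsNilpotent (TrivSqZeroExt.inl c.fst : DualNumber (ZMod (p ^ s))) :=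
    hfstnil.map (TrivSqZeroExt.inlHom _ _)
  have h2 : IsNilpotent (TrivSqZeroExt.inr c.snd : DualNumber (ZMod (p ^ s))) := by
    exact ⟨2, by rw [sq, TrivSqZeroExt.inr_mul_inr]⟩
  have := (Commute.all _ _ : Commute (TrivSqZeroExt.inl c.fst : DualNumber (ZMod (p ^ s))) (TrivSqZeroExt.inr c.snd)).isNilpotent_add h1 h2
  rwa [TrivSqZeroExt.inl_fst_add_inr_snd_eq] at this

/-- `f, g ∈ R[X]` are coprime over `R` iff their reductions are coprime over `F_p`. -/
theorem coprime_iff_reduction_coprime (p s : ℕ) [Fact p.Prime] (hs : 0 < s)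
    (f g : Polynomial (DualNumber (ZMod (p ^ s)))) :
    (∃ a b : Polynomial (DualNumber (ZMod (p ^ s))), a * f + b * g = 1) ↔
      IsCoprime (f.map (dualRed p s hs)) (g.map (dualRed p s hs)) := by
  constructor
  · rintro ⟨a, b, hab⟩
    refine ⟨a.map (dualRed p s hs), b.map (dualRed p s hs), ?_⟩
    rw [← Polynomial.map_mul, ← Polynomial.map_mul, ← Polynomial.map_add, hab,
      Polynomial.map_one]
  · rintro ⟨a', b', hab⟩
    obtain ⟨a, ha⟩ := (Polynomial.map_surjective _ (dualRed_surjective p s hs)) a'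
    obtain ⟨b, hb⟩ := (Polynomial.map_surjective _ (dualRed_surjective p s hs)) b'
    set n : Polynomial (DualNumber (ZMod (p ^ s))) := a * f + b * g - 1 with hn
    have hmapn : n.map (dualRed p s hs) = 0 := by
      rw [hn, Polynomial.map_sub, Polynomial.map_add, Polynomial.map_mul, Polynomial.map_mul,
        ha, hb, hab, Polynomial.map_one, sub_self]
    have hnil : IsNilpotent n := by
      rw [Polynomial.isNilpotent_iff]
      intro i
      refine nilp_of_dualRed_eq_zero p s hs _ ?_
      have := congrArg (fun q => Polynomial.coeff q i) hmapn
      simpa [Polynomial.coeff_map] using this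
    have hu : IsUnit (1 + n) := IsNilpotent.isUnit_one_add hnil
    refine ⟨(hu.unit⁻¹ : _) * a, (hu.unit⁻¹ : _) * b, ?_⟩
    have h1 : a * f + b * g = 1 + n := by rw [hn]; ring
    rw [mul_assoc, mul_assoc, ← mul_add, h1, IsUnit.val_inv_mul]
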